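/- Let D < 0 be squarefree with D ≡ 1 mod 4, K = ℚ(√D), and I ⊆ O_K a nonzero integral ideal with ℤ-basis (α, β). Then the function q_I(x,y) = N_{K/ℚ}(xα + yβ)/N(I) takes integer values for all x, y ∈ ℤ, and q_I is an integral binary quadratic form of discriminant D in (x,y). -/

import Mathlib

/-!
For squarefree `D ≡ 1 (mod 4)` the ring of integers of `ℚ(√D)` is `ℤ[ω]` with `ω = (1 + √D)/2`,
`ω² = ω - (1 - D)/4`, so its norm form `u² + uv + ((1 - D)/4)v²` has discriminant `D`. Writing the
basis `α, β` of `I` in the basis `(1, ω)`, the norm of `xα + yβ` is this form after a linear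
substitution whose determinant is `±N(I)`. Norms of elements of `I` are divisible by `N(I)`, hence
so are the three coefficients, and the discriminant, which scales by the square of the determinant,
drops back to `D` after dividing by `N(I)`.
-/

open NumberField

theorem Rat.exists_intCast_eq_of_squarefree_mul_sq {d m : ℤ} (hd : Squarefree d) {q : ℚ}
    (h : (d : ℚ) * q ^ 2 = m) : ∃ s : ℤ, (s : ℚ) = q := by
  have hZ : d * q.num ^ 2 = (q.den : ℤ) ^ 2 * m := by
    rw [← q.num_div_den] at h
    field_simp at h
    exact_mod_cast h
  have hcop : IsCoprime (q.den : ℤ) q.num := by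
    rw [Int.isCoprime_iff_gcd_eq_one, Int.gcd_comm]
    exact_mod_cast q.reduced
  have hden_sq_dvd : (q.den : ℤ) * q.den ∣ d := by
    rw [← sq]
    exact hcop.pow.dvd_of_dvd_mul_right ⟨m, hZ⟩
  have hden : q.den = 1 := by
    simpa using Int.isUnit_iff_natAbs_eq.mp (hd _ hden_sq_dvd)
  exact ⟨q.num, by rw [← q.num_div_den, hden]; simp⟩

theorem Rat.exists_eq_int_add_half_of_isInt_trace_norm {D : ℤ} (hsq : Squarefree D)
    (hodd : Odd D) {p q : ℚ} {t n : ℤ} (ht : (t : ℚ) = 2 * p) (hn : (n : ℚ) = p ^ 2 - D * q ^ 2) :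
    ∃ k s : ℤ, p = k + s / 2 ∧ q = s / 2 := by
  obtain ⟨s, hs⟩ := Rat.exists_intCast_eq_of_squarefree_mul_sq hsq (q := 2 * q)
    (m := t ^ 2 - 4 * n) (by push_cast; rw [ht, hn]; ring)
  have hts : t ^ 2 - D * s ^ 2 = 4 * n := by
    have : ((t ^ 2 - D * s ^ 2 : ℤ) : ℚ) = ((4 * n : ℤ) : ℚ) := by
      push_cast; rw [ht, hs, hn]; ring
    exact_mod_cast this
  have hpar : Even (t - s) := by
    have h4 : Even (t ^ 2 - D * s ^ 2) := ⟨2 * n, by rw [hts]; ring⟩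
    rw [Int.even_sub, Int.even_pow' two_ne_zero, Int.even_mul, Int.even_pow' two_ne_zero] at h4
    rw [Int.even_sub, h4]
    simp [Int.not_even_iff_odd.mpr hodd]
  obtain ⟨k, hk⟩ := hpar
  refine ⟨k, s, ?_, by rw [hs]; ring⟩
  have : (t : ℚ) = s + 2 * k := by exact_mod_cast (by omega : t = s + 2 * k)
  linarith

theorem discrim_linear_subst {R : Type*} [CommRing R] (a b c p q r s : R) :
    discrim (a * p ^ 2 + b * p * r + c * r ^ 2)
        (2 * a * p * q + b * (p * s + q * r) + 2 * c * r * s) (a * q ^ 2 + b * q * s + c * s ^ 2) =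
      (p * s - q * r) ^ 2 * discrim a b c := by
  unfold discrim; ring

section RankTwo

variable {R S : Type*} [CommRing R] [CommRing S] [Algebra R S] (B : Module.Basis (Fin 2) R S)
  {t n : R} (hB0 : B 0 = 1) (hB1 : B 1 * B 1 = t • B 1 - n • 1)
include hB0 hB1

theorem Algebra.leftMulMatrix_smul_one_add_smul (u v : R) :
    Algebra.leftMulMatrix B (u • 1 + v • B 1) = !![u, -(n * v); v, u + t * v] := by
  have h0 : (u • 1 + v • B 1) * B 0 = u • B 0 + v • B 1 := by
    rw [hB0]; simp
  have h1 : (u • 1 + v • B 1) * B 1 = (-(n * v)) • B 0 + (u + t * v) • B 1 := by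
    rw [hB0, add_mul, smul_mul_assoc, smul_mul_assoc, hB1, one_mul]
    module
  ext i j
  rw [Algebra.leftMulMatrix_eq_repr_mul]
  fin_cases i <;> fin_cases j <;> simp [h0, h1]

theorem Algebra.norm_smul_one_add_smul (u v : R) :
    Algebra.norm R (u • 1 + v • B 1) = u ^ 2 + t * u * v + n * v ^ 2 := by
  rw [Algebra.norm_eq_matrix_det B, Algebra.leftMulMatrix_smul_one_add_smul B hB0 hB1,
    Matrix.det_fin_two_of]
  ring

theorem Algebra.trace_smul_one_add_smul (u v : R) :
    Algebra.trace R S (u • 1 + v • B 1) = 2 * u + t * v := by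
  rw [Algebra.trace_eq_matrix_trace B, Algebra.leftMulMatrix_smul_one_add_smul B hB0 hB1,
    Matrix.trace_fin_two_of]
  ring

end RankTwo

theorem Ideal.exists_norm_eq_absNorm_mul_of_basis {S : Type*} [CommRing S] [IsDedekindDomain S]
    [Module.Free ℤ S] [Module.Finite ℤ S] (B : Module.Basis (Fin 2) ℤ S) {t n : ℤ}
    (hB0 : B 0 = 1) (hB1 : B 1 * B 1 = t • B 1 - n • 1) {I : Ideal S} (hI : I ≠ ⊥)
    (b : Module.Basis (Fin 2) ℤ I) :
    ∃ a₁ a₂ a₃ : ℤ,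
      (∀ x y : ℤ, Algebra.norm ℤ (x • (b 0 : S) + y • (b 1 : S)) =
        Ideal.absNorm I * (a₁ * x ^ 2 + a₂ * x * y + a₃ * y ^ 2)) ∧
      discrim a₁ a₂ a₃ = discrim 1 t n := by
  set N : ℤ := (Ideal.absNorm I : ℤ)
  set p := B.repr (b 0) 0
  set q := B.repr (b 1) 0
  set r := B.repr (b 0) 1
  set s := B.repr (b 1) 1
  have hcoord : ∀ i, (b i : S) = B.repr (b i) 0 • 1 + B.repr (b i) 1 • B 1 := fun i => by
    conv_lhs => rw [← B.sum_repr (b i)]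
    rw [Fin.sum_univ_two, hB0]
  have hnorm : ∀ x y : ℤ, Algebra.norm ℤ (x • (b 0 : S) + y • (b 1 : S)) =
      (p ^ 2 + t * p * r + n * r ^ 2) * x ^ 2
        + (2 * p * q + t * (p * s + q * r) + 2 * n * r * s) * x * y
        + (q ^ 2 + t * q * s + n * s ^ 2) * y ^ 2 := fun x y => by
    have : x • (b 0 : S) + y • (b 1 : S) = (x * p + y * q) • 1 + (x * r + y * s) • B 1 := by
      rw [hcoord 0, hcoord 1]; module
    rw [this, Algebra.norm_smul_one_add_smul B hB0 hB1]
    ring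
  have hdvd : ∀ x y : ℤ, N ∣ Algebra.norm ℤ (x • (b 0 : S) + y • (b 1 : S)) := fun x y =>
    Ideal.absNorm_dvd_norm_of_mem (I.add_mem (I.smul_of_tower_mem x (b 0).2)
      (I.smul_of_tower_mem y (b 1).2))
  obtain ⟨a₁, ha₁⟩ : N ∣ p ^ 2 + t * p * r + n * r ^ 2 := by
    have h := hdvd 1 0
    rw [hnorm] at h
    simpa using h
  obtain ⟨a₃, ha₃⟩ : N ∣ q ^ 2 + t * q * s + n * s ^ 2 := by
    have h := hdvd 0 1
    rw [hnorm] at h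
    simpa using h
  obtain ⟨a₂, ha₂⟩ : N ∣ 2 * p * q + t * (p * s + q * r) + 2 * n * r * s := by
    have h11 := hdvd 1 1
    rw [hnorm, ha₁, ha₃] at h11
    simp only [one_pow, mul_one] at h11
    exact (dvd_add_right (dvd_mul_right N a₁)).mp ((dvd_add_left (dvd_mul_right N a₃)).mp h11)
  refine ⟨a₁, a₂, a₃, fun x y => by rw [hnorm, ha₁, ha₂, ha₃]; ring, ?_⟩
  have hdet : (p * s - q * r).natAbs = Ideal.absNorm I := by
    rw [← Ideal.natAbs_det_basis_change B I b, Module.Basis.det_apply, Matrix.det_fin_two]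
    simp [Module.Basis.toMatrix_apply, p, q, r, s]
  have hN : N ≠ 0 := by simpa [N, Ideal.absNorm_eq_zero_iff] using hI
  have hsq : N ^ 2 = (p * s - q * r) ^ 2 := by
    rw [← Int.natAbs_sq (p * s - q * r), hdet]
  apply mul_left_cancel₀ (pow_ne_zero 2 hN)
  calc N ^ 2 * discrim a₁ a₂ a₃ = discrim (N * a₁) (N * a₂) (N * a₃) := by unfold discrim; ring
    _ = (p * s - q * r) ^ 2 * discrim 1 t n := by
      rw [← ha₁, ← ha₂, ← ha₃, ← discrim_linear_subst]; ring_nf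
    _ = N ^ 2 * discrim 1 t n := by rw [hsq]

section QuadraticField

variable {K : Type*} [Field K] [CharZero K] {D : ℤ} {θ : K}

theorem linearIndependent_one_of_sq_eq_intCast (hθ : θ ^ 2 = D)
    (hD : ∀ r : ℚ, r ^ 2 ≠ D) : LinearIndependent ℚ ![1, θ] := by
  rw [LinearIndependent.pair_iff]
  intro s t h
  simp only [Rat.smul_def, mul_one] at h
  by_cases ht : t = 0
  · subst ht
    simpa using h
  · refine absurd ?_ (hD (-s / t))
    have hθ' : θ = ((-s / t : ℚ) : K) := by
      push_cast
      field_simp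
      linear_combination h
    exact_mod_cast hθ' ▸ hθ

theorem exists_basis_one_sqrt (hli : LinearIndependent ℚ ![1, θ])
    (hdeg : Module.finrank ℚ K = 2) :
    ∃ B : Module.Basis (Fin 2) ℚ K, B 0 = 1 ∧ B 1 = θ := by
  have hcard : Fintype.card (Fin 2) = Module.finrank ℚ K := by simp [hdeg]
  refine ⟨basisOfLinearIndependentOfCardEqFinrank hli hcard, ?_, ?_⟩ <;>
    simp [coe_basisOfLinearIndependentOfCardEqFinrank]

variable (hθ : θ ^ 2 = D) (hli : LinearIndependent ℚ ![1, θ]) (hdeg : Module.finrank ℚ K = 2)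
include hli hdeg

theorem exists_eq_ratCast_add_mul (x : K) : ∃ p q : ℚ, x = p + q * θ := by
  obtain ⟨B, hB0, hB1⟩ := exists_basis_one_sqrt hli hdeg
  refine ⟨B.repr x 0, B.repr x 1, ?_⟩
  conv_lhs => rw [← B.sum_repr x]
  simp [Fin.sum_univ_two, hB0, hB1, Rat.smul_def]

include hθ

theorem norm_and_trace_ratCast_add_mul (p q : ℚ) :
    Algebra.norm ℚ ((p : K) + q * θ) = p ^ 2 - D * q ^ 2 ∧
      Algebra.trace ℚ K ((p : K) + q * θ) = 2 * p := by
  obtain ⟨B, hB0, hB1⟩ := exists_basis_one_sqrt hli hdeg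
  have hBB : B 1 * B 1 = (0 : ℚ) • B 1 - (-D : ℚ) • 1 := by
    rw [hB1, ← sq, hθ]; simp [Rat.smul_def]
  have hx : (p : K) + q * θ = p • 1 + q • B 1 := by simp [hB1, Rat.smul_def]
  rw [hx, Algebra.norm_smul_one_add_smul B hB0 hBB, Algebra.trace_smul_one_add_smul B hB0 hBB]
  constructor <;> ring

end QuadraticField

section RingOfIntegers

variable {K : Type*} [Field K] [CharZero K] {D c : ℤ} {θ : K} (hθ : θ ^ 2 = D)
  (hc : 1 - D = 4 * c)
include hθ hc

theorem half_one_add_mul_self : (1 + θ) / 2 * ((1 + θ) / 2) = (1 + θ) / 2 - c := by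
  have hcK : (1 : K) - D = 4 * c := by exact_mod_cast congrArg (Int.cast (R := K)) hc
  field_simp
  linear_combination hθ - hcK

theorem isIntegral_half_one_add : IsIntegral ℤ ((1 + θ) / 2) := by
  refine ⟨Polynomial.X ^ 2 - Polynomial.X + Polynomial.C c, by monicity!, ?_⟩
  simp only [Polynomial.eval₂_add, Polynomial.eval₂_sub, Polynomial.eval₂_pow,
    Polynomial.eval₂_X, Polynomial.eval₂_C]
  rw [sq, half_one_add_mul_self hθ hc, eq_intCast]
  ring

theorem exists_basis_ringOfIntegers [NumberField K] (hli : LinearIndependent ℚ ![1, θ])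
    (hdeg : Module.finrank ℚ K = 2) (hsq : Squarefree D) :
    ∃ B : Module.Basis (Fin 2) ℤ (𝓞 K), B 0 = 1 ∧ B 1 * B 1 = (1 : ℤ) • B 1 - c • 1 := by
  obtain ⟨ω, hω⟩ : ∃ ω : 𝓞 K, (ω : K) = (1 + θ) / 2 :=
    ⟨⟨(1 + θ) / 2, isIntegral_half_one_add hθ hc⟩, rfl⟩
  have hωω : ω * ω = (1 : ℤ) • ω - c • 1 := by
    ext
    simp only [map_mul, map_sub, map_zsmul, map_one]
    rw [← RingOfIntegers.coe_eq_algebraMap, hω, half_one_add_mul_self hθ hc, one_zsmul,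
      zsmul_eq_mul, mul_one]
  have hcoe : ∀ k s : ℤ, ((k • 1 + s • ω : 𝓞 K) : K) = k + s * ((1 + θ) / 2) := fun k s => by
    push_cast [hω]
    ring
  have hind : LinearIndependent ℤ ![1, ω] := by
    rw [LinearIndependent.pair_iff]
    intro s t h
    have hK : (s + t / 2 : ℚ) • (1 : K) + (t / 2 : ℚ) • θ = 0 := by
      have h' := hcoe s t
      rw [h, RingOfIntegers.coe_eq_algebraMap, map_zero] at h'
      simp only [Rat.smul_def, mul_one]
      push_cast
      linear_combination -h'
    obtain ⟨h1, h2⟩ := LinearIndependent.pair_iff.mp hli _ _ hK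
    constructor
    · exact_mod_cast (by linarith : (s : ℚ) = 0)
    · exact_mod_cast (by linarith : (t : ℚ) = 0)
  have hspan : ⊤ ≤ Submodule.span ℤ (Set.range ![1, ω]) := by
    rintro z -
    obtain ⟨p, q, hz⟩ := exists_eq_ratCast_add_mul hli hdeg (z : K)
    -- the trace `2p` and the norm `p² - Dq²` of `z = p + qθ` are integers
    obtain ⟨hN, hT⟩ := norm_and_trace_ratCast_add_mul hθ hli hdeg p q
    obtain ⟨k, s, hp, hq⟩ := Rat.exists_eq_int_add_half_of_isInt_trace_norm hsq
      ⟨-2 * c, by omega⟩ (t := Algebra.trace ℤ (𝓞 K) z) (n := Algebra.norm ℤ z)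
      (by rw [Algebra.coe_trace_int, hz, hT]) (by rw [Algebra.coe_norm_int, hz, hN])
    have hzω : z = k • 1 + s • ω := by
      ext
      rw [hcoe, hz, hp, hq]
      push_cast
      ring
    rw [hzω, Matrix.range_cons_cons_empty]
    exact Submodule.mem_span_pair.mpr ⟨k, s, rfl⟩
  exact ⟨Module.Basis.mk hind hspan, by simp, by simpa using hωω⟩

end RingOfIntegers

/-- For `D < 0` squarefree with `D ≡ 1 (mod 4)`, `K = ℚ(√D)`, and a nonzero integral
ideal `I ⊆ O_K` with `ℤ`-basis `(α, β)`, the function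
`q_I(x,y) = N_{K/ℚ}(xα + yβ)/N(I)` is an integral binary quadratic form in `(x,y)` of
discriminant `D`. -/
theorem stmt_15 (D : ℤ) (hD : D < 0) (hsq : Squarefree D) (hmod : D % 4 = 1)
    (K : Type) [Field K] [NumberField K] (hdeg : Module.finrank ℚ K = 2)
    (θ : K) (hθ : θ ^ 2 = (D : K))
    (I : Ideal (𝓞 K)) (hI : I ≠ 0) (b : Module.Basis (Fin 2) ℤ I) :
    ∃ a B c : ℤ,
      (∀ x y : ℤ,
        Algebra.norm ℤ (x • ((b 0 : I) : 𝓞 K) + y • ((b 1 : I) : 𝓞 K)) =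
          (Ideal.absNorm I : ℤ) * (a * x ^ 2 + B * x * y + c * y ^ 2)) ∧
      B ^ 2 - 4 * a * c = D := by
  obtain ⟨c, hc⟩ : (4 : ℤ) ∣ 1 - D := by omega
  have hli : LinearIndependent ℚ ![1, θ] :=
    linearIndependent_one_of_sq_eq_intCast hθ fun r hr => by
      have : (r ^ 2 : ℚ) < 0 := by rw [hr]; exact_mod_cast hD
      exact (sq_nonneg r).not_gt this
  obtain ⟨ℬ, hℬ0, hℬℬ⟩ := exists_basis_ringOfIntegers hθ hc hli hdeg hsq
  obtain ⟨a, B, c', hnorm, hdisc⟩ := Ideal.exists_norm_eq_absNorm_mul_of_basis ℬ hℬ0 hℬℬ hI b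
  refine ⟨a, B, c', hnorm, ?_⟩
  unfold discrim at hdisc
  omega
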